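/- Let γ ∈ ℝ and A ⊆ ℚ̄. If A has the γ-Bogomolov property, then the set A ∖ μ_A has the δ-Northcott property for every real δ > γ. -/

import Mathlib

open Polynomial

noncomputable section

/-- The primitive integer minimal polynomial of an algebraic number `x ∈ ℂ`. -/
def intMinpoly (x : ℂ) : Polynomial ℤ :=
  (IsLocalization.integerNormalization (nonZeroDivisors ℤ) (minpoly ℚ x)).primPart

/-- `deg(x) = [ℚ(x):ℚ]`, the degree of an algebraic number. -/
def degQ (x : ℂ) : ℕ := (minpoly ℚ x).natDegree

/-- The absolute logarithmic Weil height of an algebraic number `x`, given as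
`(1/deg x) · log (|a₀| · ∏ max(1,|conjugate|))` where `a₀` is the leading coefficient of the
primitive integer minimal polynomial of `x` and the product runs over the complex roots
of that polynomial (i.e. the conjugates of `x`). -/
def weilHeight (x : ℂ) : ℝ :=
  (degQ x : ℝ)⁻¹ *
    Real.log (((intMinpoly x).leadingCoeff.natAbs : ℝ) *
      (((intMinpoly x).map (Int.castRingHom ℂ)).roots.map
        (fun z => max 1 ‖z‖)).prod)

/-- The `γ`-weighted Weil height `h_γ(x) = deg(x)^γ · h(x)`. -/
def wheight (γ : ℝ) (x : ℂ) : ℝ := (degQ x : ℝ) ^ γ * weilHeight x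

/-- `x` is a root of unity. -/
def IsRootOfUnity (x : ℂ) : Prop := ∃ n : ℕ, 0 < n ∧ x ^ n = 1

/-- `μ_A`, the set of roots of unity contained in `A`. -/
def muSet (A : Set ℂ) : Set ℂ := {a ∈ A | IsRootOfUnity a}

/-- `A` has the `γ`-Northcott property: for every `C > 0` there are only finitely many
`a ∈ A` with `h_γ(a) < C`. -/
def NorthcottProp (γ : ℝ) (A : Set ℂ) : Prop :=
  ∀ C : ℝ, 0 < C → {a ∈ A | wheight γ a < C}.Finite

/-- `A` has the `γ`-Bogomolov property: for some `C > 0` there are only finitely many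
`a ∈ A ∖ μ_A` with `h_γ(a) < C`. -/
def BogomolovProp (γ : ℝ) (A : Set ℂ) : Prop :=
  ∃ C : ℝ, 0 < C ∧ {a ∈ A \ muSet A | wheight γ a < C}.Finite

/-- The `γ`-Northcott number `Nor_γ(A) = inf {C > 0 | N_γ(A,C) = ∞}` (equal to `∞` if
`N_γ(A,C)` is finite for every `C`). -/
def northcottNumber (γ : ℝ) (A : Set ℂ) : EReal :=
  sInf {x : EReal | ∃ C : ℝ, x = (C : EReal) ∧ 0 < C ∧ ¬ {a ∈ A | wheight γ a < C}.Finite}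

/-- `I_N(A) = {γ ∈ ℝ | A has γ-(N)}`. -/
def IN (A : Set ℂ) : Set ℝ := {γ | NorthcottProp γ A}

/-- `I_B(A) = {γ ∈ ℝ | A has γ-(B)}`. -/
def IB (A : Set ℂ) : Set ℝ := {γ | BogomolovProp γ A}

/-! The Weil height of `x` is `log M(f) / deg x` for the Mahler measure `M(f)` of the primitive
integer minimal polynomial `f` of `x`, so Northcott's theorem for integer polynomials gives
finiteness of algebraic numbers of bounded degree and height. If `h_γ(a) ≥ C` and `h_δ(a) < C'`,
then `deg(a)^(δ - γ) · C ≤ h_δ(a) < C'` bounds the degree of `a`, and with it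
`h(a) = deg(a)^(-δ) h_δ(a)`. So the points of `A ∖ μ_A` with `h_δ < C'` lie in the finite
exceptional set of the Bogomolov property or in such a set of bounded degree and height. -/

lemma natDegree_integerNormalization {R K : Type*} [CommRing R] [IsDomain R] [Field K]
    [Algebra R K] [IsFractionRing R K] (p : K[X]) :
    (IsLocalization.integerNormalization (nonZeroDivisors R) p).natDegree = p.natDegree := by
  obtain ⟨b, hb, hmap⟩ := IsLocalization.integerNormalization_spec (nonZeroDivisors R) p
  rw [← natDegree_map_eq_of_injective (IsFractionRing.injective R K), hmap,
    ← algebraMap_smul K, natDegree_smul_of_smul_regular]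
  exact (IsFractionRing.to_map_ne_zero_of_mem_nonZeroDivisors hb).isUnit.isSMulRegular _

lemma intMinpoly_ne_zero (x : ℂ) : intMinpoly x ≠ 0 :=
  primPart_ne_zero _

lemma natDegree_intMinpoly (x : ℂ) : (intMinpoly x).natDegree = degQ x := by
  rw [intMinpoly, natDegree_primPart, natDegree_integerNormalization, degQ]

lemma aeval_intMinpoly {x : ℂ} (hx : IsAlgebraic ℚ x) : aeval x (intMinpoly x) = 0 :=
  aeval_primPart_eq_zero
    (IsFractionRing.integerNormalization_eq_zero_iff.not.mpr (minpoly.ne_zero hx.isIntegral))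
    (IsLocalization.integerNormalization_aeval_eq_zero _ _ (minpoly.aeval ℚ x))

lemma degQ_pos {x : ℂ} (hx : IsAlgebraic ℚ x) : 0 < degQ x :=
  minpoly.natDegree_pos hx.isIntegral

lemma mahlerMeasure_intMinpoly (x : ℂ) :
    ((intMinpoly x).map (Int.castRingHom ℂ)).mahlerMeasure =
      ((intMinpoly x).leadingCoeff.natAbs : ℝ) *
        (((intMinpoly x).map (Int.castRingHom ℂ)).roots.map (fun z => max 1 ‖z‖)).prod := by
  rw [mahlerMeasure_eq_leadingCoeff_mul_prod_roots,
    leadingCoeff_map_of_injective (Int.castRingHom ℂ).injective_int]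
  simp [Nat.cast_natAbs]

lemma weilHeight_eq_log_mahlerMeasure (x : ℂ) :
    weilHeight x =
      (degQ x : ℝ)⁻¹ * Real.log ((intMinpoly x).map (Int.castRingHom ℂ)).mahlerMeasure := by
  rw [weilHeight, mahlerMeasure_intMinpoly]

lemma weilHeight_nonneg (x : ℂ) : 0 ≤ weilHeight x := by
  rw [weilHeight_eq_log_mahlerMeasure]
  exact mul_nonneg (by positivity)
    (Real.log_nonneg (one_le_mahlerMeasure_of_ne_zero (intMinpoly_ne_zero x)))

lemma mahlerMeasure_intMinpoly_eq_exp {x : ℂ} (hx : IsAlgebraic ℚ x) :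
    ((intMinpoly x).map (Int.castRingHom ℂ)).mahlerMeasure =
      Real.exp (degQ x * weilHeight x) := by
  have hdeg : (degQ x : ℝ) ≠ 0 := by exact_mod_cast (degQ_pos hx).ne'
  rw [weilHeight_eq_log_mahlerMeasure, mul_inv_cancel_left₀ hdeg, Real.exp_log
    (zero_lt_one.trans_le (one_le_mahlerMeasure_of_ne_zero (intMinpoly_ne_zero x)))]

theorem finite_setOf_isAlgebraic_degQ_le_weilHeight_le (D : ℕ) (B : ℝ) :
    {x : ℂ | IsAlgebraic ℚ x ∧ degQ x ≤ D ∧ weilHeight x ≤ B}.Finite := by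
  refine ((finite_mahlerMeasure_le D ⟨Real.exp (D * B), (Real.exp_pos _).le⟩).biUnion
    fun p _ => p.rootSet_finite ℂ).subset ?_
  rintro x ⟨hx, hxD, hxB⟩
  refine Set.mem_biUnion (x := intMinpoly x) ⟨(natDegree_intMinpoly x).trans_le hxD, ?_⟩
    (mem_rootSet.mpr ⟨intMinpoly_ne_zero x, aeval_intMinpoly hx⟩)
  rw [mahlerMeasure_intMinpoly_eq_exp hx]
  exact Real.exp_le_exp.mpr <|
    mul_le_mul (by exact_mod_cast hxD) hxB (weilHeight_nonneg x) (Nat.cast_nonneg D)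

lemma wheight_zero (x : ℂ) : wheight 0 x = weilHeight x := by
  rw [wheight, Real.rpow_zero, one_mul]

lemma wheight_eq_rpow_sub_mul_wheight {x : ℂ} (hx : 0 < degQ x) (γ δ : ℝ) :
    wheight δ x = (degQ x : ℝ) ^ (δ - γ) * wheight γ x := by
  rw [wheight, wheight, ← mul_assoc, ← Real.rpow_add (by exact_mod_cast hx), sub_add_cancel]

lemma degQ_le_of_le_wheight_of_wheight_lt {x : ℂ} (hx : 0 < degQ x) {γ δ C C' : ℝ}
    (hγδ : γ < δ) (hC : 0 < C) (hγ : C ≤ wheight γ x) (hδ : wheight δ x < C') :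
    (degQ x : ℝ) ≤ (C' / C) ^ (δ - γ)⁻¹ := by
  have hsub : 0 < δ - γ := sub_pos.mpr hγδ
  have hpow : (degQ x : ℝ) ^ (δ - γ) * C < C' :=
    calc (degQ x : ℝ) ^ (δ - γ) * C ≤ (degQ x : ℝ) ^ (δ - γ) * wheight γ x := by gcongr
      _ = wheight δ x := (wheight_eq_rpow_sub_mul_wheight hx γ δ).symm
      _ < C' := hδ
  have hC' : 0 < C' := lt_of_le_of_lt (by positivity) hpow
  rw [Real.le_rpow_inv_iff_of_pos (Nat.cast_nonneg _) (div_pos hC' hC).le hsub]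
  exact ((lt_div_iff₀ hC).mpr hpow).le

lemma weilHeight_le_of_wheight_lt {x : ℂ} (hx : 0 < degQ x) {D : ℕ} (hD : degQ x ≤ D)
    {δ C' : ℝ} (hC' : 0 ≤ C') (hδ : wheight δ x < C') :
    weilHeight x ≤ (D : ℝ) ^ |δ| * C' := by
  have hd : (1 : ℝ) ≤ degQ x := by exact_mod_cast hx
  have hdD : (degQ x : ℝ) ≤ D := by exact_mod_cast hD
  calc weilHeight x = (degQ x : ℝ) ^ (-δ) * wheight δ x := by
        rw [← wheight_zero, wheight_eq_rpow_sub_mul_wheight hx δ 0, zero_sub]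
    _ ≤ (degQ x : ℝ) ^ (-δ) * C' := by gcongr
    _ ≤ (degQ x : ℝ) ^ |δ| * C' :=
        mul_le_mul_of_nonneg_right (Real.rpow_le_rpow_of_exponent_le hd (neg_le_abs δ)) hC'
    _ ≤ (D : ℝ) ^ |δ| * C' := by gcongr

/-- If `A ⊆ ℚ̄` has the `γ`-Bogomolov property, then `A ∖ μ_A` has the `δ`-Northcott
property for every `δ > γ`. -/
theorem northcott_of_bogomolov (γ : ℝ) (A : Set ℂ)
    (hA : ∀ a ∈ A, IsAlgebraic ℚ a) (hB : BogomolovProp γ A) :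
    ∀ δ : ℝ, γ < δ → NorthcottProp δ (A \ muSet A) := by
  intro δ hγδ C' hC'
  obtain ⟨C, hC, hexceptional⟩ := hB
  set D : ℕ := ⌈(C' / C) ^ (δ - γ)⁻¹⌉₊
  refine (hexceptional.union
    (finite_setOf_isAlgebraic_degQ_le_weilHeight_le D ((D : ℝ) ^ |δ| * C'))).subset ?_
  rintro a ⟨ha, hδa⟩
  by_cases hγa : wheight γ a < C
  · exact Or.inl ⟨ha, hγa⟩
  have halg := hA a ha.1
  have hdeg : degQ a ≤ D := Nat.cast_le.mp <|
    (degQ_le_of_le_wheight_of_wheight_lt (degQ_pos halg) hγδ hC (not_lt.mp hγa) hδa).trans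
      (Nat.le_ceil _)
  exact Or.inr ⟨halg, hdeg, weilHeight_le_of_wheight_lt (degQ_pos halg) hdeg hC'.le hδa⟩

end
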